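/- arXiv:1107.3293 — 3 statements merged into one kernel-verified Lean document; each statement's English description precedes it below -/
import Mathlib

section
/- Suppose that π_t > 0 almost surely for every t ≥ 0, and define B_t = exp(∫_0^t σ_s²/π_s ds) ∈ (0, ∞]. Then for every t ≥ 0 one has the identity E[π_t B_t] = E[ B_t · ∫_t^∞ σ_s² ds ], as an equality of values in [0, ∞]. -/
/-!
Since `π_t` is a version of `E_t[∫_t^∞ σ²]`, the identity is the tower property
`E[B_t E_t[X]] = E[B_t X]`, which holds as soon as `B_t` is `ℱ_t`-measurable: its exponent is
the time integral over `(0, t]` of a progressively measurable process. Working with the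
`[0, ∞]`-valued conditional expectation `μ⁻[·|ℱ_t]` lets `B_t` take the value `∞` without any
integrability assumption on it.
-/

open MeasureTheory Filter TopologicalSpace
open scoped ENNReal

namespace MeasureTheory

variable {Ω : Type*}

theorem IsStronglyProgressive.stronglyMeasurable_uncurry {β : Type*} {m0 : MeasurableSpace Ω}
    [TopologicalSpace β] [PseudoMetrizableSpace β]
    {ℱ : Filtration ℝ m0} {u : ℝ → Ω → β} (hu : IsStronglyProgressive ℱ u) :
    StronglyMeasurable (Function.uncurry u) := by
  have h_trunc : ∀ n : ℕ, StronglyMeasurable fun p : ℝ × Ω => u (min p.1 n) p.2 := by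
    intro n
    have hle : (Subtype.instMeasurableSpace : MeasurableSpace (Set.Iic (n : ℝ))).prod (ℱ n) ≤
        Subtype.instMeasurableSpace.prod m0 :=
      sup_le_sup le_rfl (MeasurableSpace.comap_mono (ℱ.le n))
    exact ((hu n).mono hle).comp_measurable
      (((measurable_fst.min measurable_const).subtype_mk
        (h := fun _ => Set.mem_Iic.2 (min_le_right _ _))).prodMk measurable_snd)
  refine stronglyMeasurable_of_tendsto atTop h_trunc
    (tendsto_pi_nhds.2 fun p => tendsto_const_nhds.congr' ?_)
  filter_upwards [eventually_ge_atTop ⌈p.1⌉₊] with n hn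
  simp [Function.uncurry, min_eq_left ((Nat.le_ceil _).trans (Nat.cast_le.2 hn))]

theorem IsProgressive.measurable_setLIntegral {m0 : MeasurableSpace Ω}
    {ℱ : Filtration ℝ m0} {u : ℝ → Ω → ℝ≥0∞} (hu : IsProgressive ℱ u) {t : ℝ} {S : Set ℝ}
    (hS : MeasurableSet S) (hSt : S ⊆ Set.Iic t) :
    Measurable[ℱ t] fun ω => ∫⁻ s in S, u s ω := by
  have h_trunc : Measurable[(ℱ t).prod _] fun q : Ω × ℝ => u (min q.2 t) q.1 :=
    (hu t).comp (((measurable_snd.min measurable_const).subtype_mk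
      (h := fun _ => Set.mem_Iic.2 (min_le_right _ _))).prodMk measurable_fst)
  have h_eq : ∀ ω, ∫⁻ s in S, u s ω = ∫⁻ s in S, u (min s t) ω := fun ω =>
    setLIntegral_congr_fun hS fun s hs => by rw [min_eq_left (hSt hs)]
  simp_rw [h_eq]
  exact @Measurable.lintegral_prod_right' Ω ℝ (ℱ t) _ _ _ _ h_trunc

theorem lintegral_mul_condLExp {m m0 : MeasurableSpace Ω} (hm : m ≤ m0)
    {μ : Measure Ω} [SigmaFinite (μ.trim hm)] {f X : Ω → ℝ≥0∞} (hf : Measurable[m] f)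
    (hX : AEMeasurable X μ) :
    ∫⁻ ω, f ω * μ⁻[X|m] ω ∂μ = ∫⁻ ω, f ω * X ω ∂μ := by
  have h_trim : (μ.withDensity μ⁻[X|m]).trim hm = (μ.withDensity X).trim hm := by
    refine @Measure.ext _ m _ _ fun s hs => ?_
    rw [trim_measurableSet_eq hm hs, trim_measurableSet_eq hm hs, withDensity_apply _ (hm s hs),
      withDensity_apply _ (hm s hs), setLIntegral_condLExp hm μ X hs]
  have hf0 : Measurable f := hf.mono hm le_rfl
  calc ∫⁻ ω, f ω * μ⁻[X|m] ω ∂μ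
      = ∫⁻ ω, f ω ∂(μ.withDensity μ⁻[X|m]) := by
        rw [lintegral_withDensity_eq_lintegral_mul _ (measurable_condLExp' m μ X) hf0]
        simp_rw [Pi.mul_apply, mul_comm]
    _ = ∫⁻ ω, f ω ∂((μ.withDensity X).trim hm) := by rw [← h_trim, lintegral_trim hm hf]
    _ = ∫⁻ ω, f ω * X ω ∂μ := by
        rw [lintegral_trim hm hf, lintegral_withDensity_eq_lintegral_mul₀ hX hf0.aemeasurable]
        simp_rw [Pi.mul_apply, mul_comm]

theorem ofReal_condExp_toReal_ae_eq_condLExp {m m0 : MeasurableSpace Ω}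
    {μ : Measure Ω} {X : Ω → ℝ≥0∞} (hX : AEMeasurable X μ) (hX_int : ∫⁻ ω, X ω ∂μ ≠ ∞) :
    (fun ω => ENNReal.ofReal (μ[fun ω => (X ω).toReal|m] ω)) =ᵐ[μ] μ⁻[X|m] := by
  filter_upwards [toReal_condLExp m hX hX_int, condLExp_lt_top (mΩ := m) hX_int]
    with ω h_eq h_lt
  rw [← h_eq, ENNReal.ofReal_toReal h_lt.ne]

end MeasureTheory

theorem deflated_money_market_tower_identity_general
    {Ω : Type*} {m0 : MeasurableSpace Ω} (μ : Measure Ω) [IsProbabilityMeasure μ]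
    (ℱ : Filtration ℝ m0) (σ : ℝ → Ω → ℝ) (hσprog : ProgMeasurable ℱ σ)
    (hσint : ∫⁻ ω, (∫⁻ s in Set.Ioi (0 : ℝ), ENNReal.ofReal ((σ s ω) ^ 2)) ∂μ < ⊤)
    (π : ℝ → Ω → ℝ) (hπprog : ProgMeasurable ℱ π)
    (hπver : ∀ t : ℝ, 0 ≤ t → π t =ᵐ[μ] μ[fun ω => ∫ s in Set.Ioi t, (σ s ω) ^ 2|ℱ t])
    (B : ℝ → Ω → ℝ≥0∞)
    (hB : ∀ t ω, B t ω =
      if (∫⁻ s in Set.Ioc (0 : ℝ) t, ENNReal.ofReal ((σ s ω) ^ 2 / π s ω)) = ⊤ then ⊤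
      else ENNReal.ofReal (Real.exp
        ((∫⁻ s in Set.Ioc (0 : ℝ) t, ENNReal.ofReal ((σ s ω) ^ 2 / π s ω)).toReal))) :
    ∀ t : ℝ, 0 ≤ t →
      ∫⁻ ω, ENNReal.ofReal (π t ω) * B t ω ∂μ
        = ∫⁻ ω, B t ω * (∫⁻ s in Set.Ioi t, ENNReal.ofReal ((σ s ω) ^ 2)) ∂μ := by
  intro t ht
  have hσ := IsStronglyProgressive.stronglyMeasurable_uncurry hσprog
  set L : Ω → ℝ≥0∞ := fun ω => ∫⁻ s in Set.Ioi t, ENNReal.ofReal ((σ s ω) ^ 2)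
  have hL_meas : Measurable L := (ENNReal.measurable_ofReal.comp
    ((hσ.measurable.comp measurable_swap).pow_const 2)).lintegral_prod_right'
  have hL_int : ∫⁻ ω, L ω ∂μ ≠ ∞ :=
    ((lintegral_mono fun ω => lintegral_mono_set (Set.Ioi_subset_Ioi ht)).trans_lt hσint).ne
  have h_tail : (fun ω => ∫ s in Set.Ioi t, (σ s ω) ^ 2) = fun ω => (L ω).toReal :=
    funext fun ω => integral_eq_lintegral_of_nonneg_ae (ae_of_all _ fun s => sq_nonneg _)
      ((hσ.comp_measurable measurable_prodMk_right).pow 2).aestronglyMeasurable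
  have hB_meas : Measurable[ℱ t] (B t) := by
    have h_exponent : Measurable[ℱ t]
        fun ω => ∫⁻ s in Set.Ioc 0 t, ENNReal.ofReal (σ s ω ^ 2 / π s ω) :=
      IsProgressive.measurable_setLIntegral (fun i => ENNReal.measurable_ofReal.comp
        (((IsStronglyProgressive.isProgressive hσprog i).pow_const 2).div
          (IsStronglyProgressive.isProgressive hπprog i))) measurableSet_Ioc
        Set.Ioc_subset_Iic_self
    rw [funext (hB t)]
    exact Measurable.ite (measurableSet_eq_fun h_exponent measurable_const) measurable_const
      (ENNReal.measurable_ofReal.comp (Real.measurable_exp.comp h_exponent.ennreal_toReal))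
  calc ∫⁻ ω, ENNReal.ofReal (π t ω) * B t ω ∂μ = ∫⁻ ω, B t ω * μ⁻[L|ℱ t] ω ∂μ := by
        refine lintegral_congr_ae ?_
        filter_upwards [hπver t ht, ofReal_condExp_toReal_ae_eq_condLExp (m := ℱ t)
          hL_meas.aemeasurable hL_int] with ω hπ hL
        rw [mul_comm, hπ, h_tail, hL]
    _ = ∫⁻ ω, B t ω * L ω ∂μ := lintegral_mul_condLExp (ℱ.le t) hB_meas hL_meas.aemeasurable

/-- Let `σ` be progressively measurable with `E[∫_0^∞ σ_s² ds] < ∞` and let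
`π_t = E_t[∫_t^∞ σ_s² ds]` (a progressively measurable version) with `π_t > 0` a.s. for each
`t ≥ 0`. Define `B_t = exp(∫_0^t σ_s²/π_s ds) ∈ (0, ∞]` (with value `∞` when the exponent is
infinite). Then for every `t ≥ 0`, as an equality in `[0, ∞]`,
`E[π_t B_t] = E[B_t · ∫_t^∞ σ_s² ds]`. -/
theorem deflated_money_market_tower_identity
    {Ω : Type*} {m0 : MeasurableSpace Ω} (μ : Measure Ω) [IsProbabilityMeasure μ]
    (ℱ : Filtration ℝ m0) (σ : ℝ → Ω → ℝ) (hσprog : ProgMeasurable ℱ σ)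
    (hσint : ∫⁻ ω, (∫⁻ s in Set.Ioi (0 : ℝ), ENNReal.ofReal ((σ s ω) ^ 2)) ∂μ < ⊤)
    (π : ℝ → Ω → ℝ) (hπprog : ProgMeasurable ℱ π)
    (hπver : ∀ t : ℝ, 0 ≤ t → π t =ᵐ[μ] μ[fun ω => ∫ s in Set.Ioi t, (σ s ω) ^ 2|ℱ t])
    (hπpos : ∀ t : ℝ, 0 ≤ t → ∀ᵐ ω ∂μ, 0 < π t ω)
    (B : ℝ → Ω → ℝ≥0∞)
    (hB : ∀ t ω, B t ω =
      if (∫⁻ s in Set.Ioc (0 : ℝ) t, ENNReal.ofReal ((σ s ω) ^ 2 / π s ω)) = ⊤ then ⊤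
      else ENNReal.ofReal (Real.exp
        ((∫⁻ s in Set.Ioc (0 : ℝ) t, ENNReal.ofReal ((σ s ω) ^ 2 / π s ω)).toReal))) :
    ∀ t : ℝ, 0 ≤ t →
      ∫⁻ ω, ENNReal.ofReal (π t ω) * B t ω ∂μ
        = ∫⁻ ω, B t ω * (∫⁻ s in Set.Ioi t, ENNReal.ofReal ((σ s ω) ^ 2)) ∂μ :=
  deflated_money_market_tower_identity_general μ ℱ σ hσprog hσint π hπprog hπver B hB
end

section
/- Suppose that π_s > 0 almost surely for every s ≥ 0, and define B_s = exp(∫_0^s σ_u²/π_u du) ∈ (0, ∞]. Then for every t ≥ 0 one has, as an equality of values in [0, ∞], E[ ∫_0^t σ_s² B_s · (∫_s^∞ σ_u² du)/π_s ds ] = E[ ∫_0^t σ_s² B_s ds ]. -/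
/-!
By Tonelli it suffices to prove the identity at each fixed time `s > 0`. There the factor
`σ_s² B_s / π_s` is `ℱ_s`-measurable, since `σ`, `π`, and with them the running integral defining
`B`, are progressive. As `π_s` is the conditional expectation of the tail `∫_s^∞ σ_u² du`, the
tail may be replaced by `π_s` in front of any nonnegative `ℱ_s`-measurable factor, and
`π_s · σ_s² B_s / π_s = σ_s² B_s` because `π_s > 0`.
-/

open MeasureTheory
open scoped ENNReal

namespace MeasureTheory

theorem measurable_setLIntegral_prodMk_preimage {α β : Type*} [MeasurableSpace α]
    [MeasurableSpace β] {ν : Measure β} [SFinite ν] {S : Set (α × β)} (hS : MeasurableSet S)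
    {f : α × β → ℝ≥0∞} (hf : Measurable f) :
    Measurable fun a => ∫⁻ b in Prod.mk a ⁻¹' S, f (a, b) ∂ν := by
  simp_rw [← lintegral_indicator (measurable_prodMk_left hS)]
  exact (hf.indicator hS).lintegral_prod_right'

theorem lintegral_setLIntegral_congr {α β : Type*} [MeasurableSpace α] [MeasurableSpace β]
    {μ : Measure α} [SFinite μ] {ν : Measure β} [SFinite ν] {S : Set β} (hS : MeasurableSet S)
    {F G : β → α → ℝ≥0∞} (hF : Measurable (Function.uncurry F))
    (hG : Measurable (Function.uncurry G)) (h : ∀ s ∈ S, ∫⁻ a, F s a ∂μ = ∫⁻ a, G s a ∂μ) :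
    ∫⁻ a, ∫⁻ s in S, F s a ∂ν ∂μ = ∫⁻ a, ∫⁻ s in S, G s a ∂ν ∂μ := by
  rw [lintegral_lintegral_swap (f := fun a s => F s a) (hF.comp measurable_swap).aemeasurable,
    lintegral_lintegral_swap (f := fun a s => G s a) (hG.comp measurable_swap).aemeasurable]
  exact setLIntegral_congr_fun hS h

variable {Ω : Type*} {m m0 : MeasurableSpace Ω}

namespace IsProgressive

variable {β : Type*} [MeasurableSpace β] {ℱ : Filtration ℝ m0} {u : ℝ → Ω → β}

theorem measurable_comp_min (hu : IsProgressive ℱ u) (i : ℝ) :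
    Measurable[MeasurableSpace.prod inferInstance (ℱ i)] fun p : ℝ × Ω => u (min p.1 i) p.2 :=
  let _ := ℱ i
  (hu i).comp ((Measurable.subtype_mk (h := fun _ => Set.mem_Iic.2 (min_le_right _ _))
    (measurable_fst.min measurable_const)).prodMk measurable_snd)

theorem measurable_uncurry (hu : IsProgressive ℱ u) : Measurable (Function.uncurry u) := by
  have h_trunc (n : ℕ) : Measurable fun p : ℝ × Ω => u (min p.1 n) p.2 :=
    (hu.measurable_comp_min n).mono (sup_le_sup le_rfl (MeasurableSpace.comap_mono (ℱ.le n)))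
      le_rfl
  have h_eq : Function.uncurry u
      = (fun q : (ℝ × Ω) × ℕ => u (min q.1.1 q.2) q.1.2) ∘ fun p => (p, ⌈p.1⌉₊) := by
    funext p
    simp [Function.uncurry, min_eq_left (Nat.le_ceil p.1)]
  rw [h_eq]
  exact (measurable_from_prod_countable_left h_trunc).comp
    (measurable_id.prodMk (Nat.ceil_mono.measurable.comp measurable_fst))

theorem setLIntegral_Ioc {ρ : ℝ → Ω → ℝ≥0∞} (hρ : IsProgressive ℱ ρ) (a : ℝ) :
    IsProgressive ℱ fun s ω => ∫⁻ r in Set.Ioc a s, ρ r ω := by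
  intro i
  let _ := ℱ i
  have hS : MeasurableSet {q : (Set.Iic i × Ω) × ℝ | a < q.2 ∧ q.2 ≤ q.1.1} :=
    (measurableSet_lt measurable_const measurable_snd).inter
      (measurableSet_le measurable_snd (measurable_subtype_coe.comp measurable_fst.fst))
  have hf : Measurable fun q : (Set.Iic i × Ω) × ℝ => ρ (min q.2 i) q.1.2 :=
    (hρ.measurable_comp_min i).comp (measurable_snd.prodMk measurable_fst.snd)
  have h_eq : (fun p : Set.Iic i × Ω => ∫⁻ r in Set.Ioc a p.1, ρ r p.2)
      = fun p => ∫⁻ r in Set.Ioc a p.1, ρ (min r i) p.2 := by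
    funext p
    refine setLIntegral_congr_fun measurableSet_Ioc fun r hr => ?_
    rw [min_eq_left (hr.2.trans p.1.2)]
  rw [h_eq]
  exact measurable_setLIntegral_prodMk_preimage hS hf

end IsProgressive

section CondExp

variable {μ : Measure Ω}

theorem lintegral_mul_eq_of_forall_setLIntegral_eq (hm : m ≤ m0) {X Y : Ω → ℝ≥0∞}
    (hX : AEMeasurable X μ) (hY : AEMeasurable Y μ)
    (hXY : ∀ A, MeasurableSet[m] A → ∫⁻ ω in A, X ω ∂μ = ∫⁻ ω in A, Y ω ∂μ)
    {g : Ω → ℝ≥0∞} (hg : Measurable[m] g) :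
    ∫⁻ ω, X ω * g ω ∂μ = ∫⁻ ω, Y ω * g ω ∂μ := by
  have h_trim : (μ.withDensity X).trim hm = (μ.withDensity Y).trim hm := by
    refine @Measure.ext _ m _ _ fun A hA => ?_
    rw [trim_measurableSet_eq hm hA, trim_measurableSet_eq hm hA,
      withDensity_apply _ (hm A hA), withDensity_apply _ (hm A hA), hXY A hA]
  have hg0 : Measurable g := hg.mono hm le_rfl
  calc ∫⁻ ω, X ω * g ω ∂μ = ∫⁻ ω, g ω ∂(μ.withDensity X).trim hm := by
        rw [lintegral_trim hm hg, lintegral_withDensity_eq_lintegral_mul₀ hX hg0.aemeasurable]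
        rfl
    _ = ∫⁻ ω, Y ω * g ω ∂μ := by
        rw [h_trim, lintegral_trim hm hg,
          lintegral_withDensity_eq_lintegral_mul₀ hY hg0.aemeasurable]
        rfl

theorem setLIntegral_ofReal_condExp (hm : m ≤ m0) [SigmaFinite (μ.trim hm)] {f : Ω → ℝ}
    (hf : Integrable f μ) (hf_nonneg : 0 ≤ᵐ[μ] f) {A : Set Ω} (hA : MeasurableSet[m] A) :
    ∫⁻ ω in A, ENNReal.ofReal (μ[f|m] ω) ∂μ = ∫⁻ ω in A, ENNReal.ofReal (f ω) ∂μ := by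
  rw [← ofReal_integral_eq_lintegral_ofReal integrable_condExp.restrict
      (ae_restrict_of_ae (condExp_nonneg hf_nonneg)),
    ← ofReal_integral_eq_lintegral_ofReal hf.restrict (ae_restrict_of_ae hf_nonneg),
    setIntegral_condExp hm hf hA]

theorem lintegral_mul_div_eq_of_ae_eq_condExp (hm : m ≤ m0) [SigmaFinite (μ.trim hm)]
    {X : Ω → ℝ≥0∞} (hX : AEMeasurable X μ) (hX_int : ∫⁻ ω, X ω ∂μ ≠ ∞) {Y : Ω → ℝ}
    (hY : Measurable[m] Y) (hYX : Y =ᵐ[μ] μ[fun ω => (X ω).toReal|m])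
    (hY_pos : ∀ᵐ ω ∂μ, 0 < Y ω) {Φ : Ω → ℝ≥0∞} (hΦ : Measurable[m] Φ) :
    ∫⁻ ω, Φ ω * (X ω / ENNReal.ofReal (Y ω)) ∂μ = ∫⁻ ω, Φ ω ∂μ := by
  have hXY (A : Set Ω) (hA : MeasurableSet[m] A) :
      ∫⁻ ω in A, X ω ∂μ = ∫⁻ ω in A, ENNReal.ofReal (Y ω) ∂μ := by
    calc ∫⁻ ω in A, X ω ∂μ = ∫⁻ ω in A, ENNReal.ofReal (X ω).toReal ∂μ :=
          lintegral_congr_ae (ae_restrict_of_ae (ofReal_toReal_ae_eq (ae_lt_top' hX hX_int)).symm)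
      _ = ∫⁻ ω in A, ENNReal.ofReal (μ[fun ω => (X ω).toReal|m] ω) ∂μ :=
          (setLIntegral_ofReal_condExp hm (integrable_toReal_of_lintegral_ne_top hX hX_int)
            (ae_of_all _ fun _ => ENNReal.toReal_nonneg) hA).symm
      _ = ∫⁻ ω in A, ENNReal.ofReal (Y ω) ∂μ :=
          lintegral_congr_ae (ae_restrict_of_ae (hYX.mono fun ω h => by simp only [h]))
  have hY_ofReal : Measurable[m] fun ω => ENNReal.ofReal (Y ω) := ENNReal.measurable_ofReal.comp hY
  calc ∫⁻ ω, Φ ω * (X ω / ENNReal.ofReal (Y ω)) ∂μ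
      = ∫⁻ ω, X ω * (Φ ω * (ENNReal.ofReal (Y ω))⁻¹) ∂μ := by
        congr 1 with ω
        rw [div_eq_mul_inv]
        ring
    _ = ∫⁻ ω, ENNReal.ofReal (Y ω) * (Φ ω * (ENNReal.ofReal (Y ω))⁻¹) ∂μ :=
        lintegral_mul_eq_of_forall_setLIntegral_eq hm hX
          (hY_ofReal.mono hm le_rfl).aemeasurable hXY (hΦ.mul hY_ofReal.inv)
    _ = ∫⁻ ω, Φ ω ∂μ := lintegral_congr_ae <| hY_pos.mono fun ω hω => by
        dsimp only
        rw [mul_comm, mul_assoc, ENNReal.inv_mul_cancel (ENNReal.ofReal_pos.mpr hω).ne'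
          ENNReal.ofReal_ne_top, mul_one]

end CondExp

theorem lintegral_setLIntegral_sq_mul_tail_div_eq (μ : Measure Ω) [IsFiniteMeasure μ]
    {ℱ : Filtration ℝ m0} {σ π : ℝ → Ω → ℝ} {B : ℝ → Ω → ℝ≥0∞} (hσ : IsProgressive ℱ σ)
    (hσ_int : ∫⁻ ω, (∫⁻ s in Set.Ioi (0 : ℝ), ENNReal.ofReal ((σ s ω) ^ 2)) ∂μ < ⊤)
    (hπ : IsProgressive ℱ π)
    (hπ_condExp : ∀ s : ℝ, 0 ≤ s → π s =ᵐ[μ] μ[fun ω => ∫ u in Set.Ioi s, (σ u ω) ^ 2|ℱ s])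
    (hπ_pos : ∀ s : ℝ, 0 ≤ s → ∀ᵐ ω ∂μ, 0 < π s ω) (hB : IsProgressive ℱ B) (t : ℝ) :
    ∫⁻ ω, (∫⁻ s in Set.Ioc (0 : ℝ) t, ENNReal.ofReal ((σ s ω) ^ 2) * B s ω
        * ((∫⁻ u in Set.Ioi s, ENNReal.ofReal ((σ u ω) ^ 2)) / ENNReal.ofReal (π s ω))) ∂μ
      = ∫⁻ ω, (∫⁻ s in Set.Ioc (0 : ℝ) t, ENNReal.ofReal ((σ s ω) ^ 2) * B s ω) ∂μ := by
  have hσ_sq : Measurable fun p : ℝ × Ω => ENNReal.ofReal ((σ p.1 p.2) ^ 2) :=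
    ENNReal.measurable_ofReal.comp (hσ.measurable_uncurry.pow_const 2)
  have h_tail : Measurable fun p : ℝ × Ω => ∫⁻ u in Set.Ioi p.1, ENNReal.ofReal ((σ u p.2) ^ 2) :=
    measurable_setLIntegral_prodMk_preimage (measurableSet_lt measurable_fst.fst measurable_snd)
      (hσ_sq.comp (measurable_snd.prodMk measurable_fst.snd))
  have h_rhs := hσ_sq.mul hB.measurable_uncurry
  have h_lhs := h_rhs.mul (h_tail.div (ENNReal.measurable_ofReal.comp hπ.measurable_uncurry))
  refine lintegral_setLIntegral_congr measurableSet_Ioc h_lhs h_rhs fun s hs => ?_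
  have h_tail_int : ∫⁻ ω, (∫⁻ u in Set.Ioi s, ENNReal.ofReal ((σ u ω) ^ 2)) ∂μ ≠ ⊤ :=
    ((lintegral_mono fun ω => lintegral_mono_set (Set.Ioi_subset_Ioi hs.1.le)).trans_lt
      hσ_int).ne
  have h_tail_toReal : (fun ω => ∫ u in Set.Ioi s, (σ u ω) ^ 2)
      = fun ω => (∫⁻ u in Set.Ioi s, ENNReal.ofReal ((σ u ω) ^ 2)).toReal := by
    funext ω
    exact integral_eq_lintegral_of_nonneg_ae (ae_of_all _ fun u => sq_nonneg (σ u ω))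
      ((hσ.measurable_uncurry.comp measurable_prodMk_right).pow_const 2).aestronglyMeasurable
  exact lintegral_mul_div_eq_of_ae_eq_condExp (ℱ.le s)
    (h_tail.comp measurable_prodMk_left).aemeasurable h_tail_int (hπ.adapted s)
    (h_tail_toReal ▸ hπ_condExp s hs.1.le) (hπ_pos s hs.1.le)
    ((ENNReal.measurable_ofReal.comp ((hσ.adapted s).pow_const 2)).mul (hB.adapted s))

end MeasureTheory

/-- Let `σ` be progressively measurable with `E[∫_0^∞ σ_s² ds] < ∞` and let
`π_s = E_s[∫_s^∞ σ_u² du]` (a progressively measurable version) with `π_s > 0` a.s. for each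
`s ≥ 0`. Define `B_s = exp(∫_0^s σ_u²/π_u du) ∈ (0, ∞]` (with value `∞` when the exponent is
infinite). Then for every `t ≥ 0`, as an equality in `[0, ∞]`,
`E[∫_0^t σ_s² B_s (∫_s^∞ σ_u² du)/π_s ds] = E[∫_0^t σ_s² B_s ds]`. -/
theorem deflated_money_market_key_identity
    {Ω : Type*} {m0 : MeasurableSpace Ω} (μ : Measure Ω) [IsProbabilityMeasure μ]
    (ℱ : Filtration ℝ m0) (σ : ℝ → Ω → ℝ) (hσprog : ProgMeasurable ℱ σ)
    (hσint : ∫⁻ ω, (∫⁻ s in Set.Ioi (0 : ℝ), ENNReal.ofReal ((σ s ω) ^ 2)) ∂μ < ⊤)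
    (π : ℝ → Ω → ℝ) (hπprog : ProgMeasurable ℱ π)
    (hπver : ∀ s : ℝ, 0 ≤ s → π s =ᵐ[μ] μ[fun ω => ∫ u in Set.Ioi s, (σ u ω) ^ 2|ℱ s])
    (hπpos : ∀ s : ℝ, 0 ≤ s → ∀ᵐ ω ∂μ, 0 < π s ω)
    (B : ℝ → Ω → ℝ≥0∞)
    (hB : ∀ s ω, B s ω =
      if (∫⁻ u in Set.Ioc (0 : ℝ) s, ENNReal.ofReal ((σ u ω) ^ 2 / π u ω)) = ⊤ then ⊤
      else ENNReal.ofReal (Real.exp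
        ((∫⁻ u in Set.Ioc (0 : ℝ) s, ENNReal.ofReal ((σ u ω) ^ 2 / π u ω)).toReal))) :
    ∀ t : ℝ, 0 ≤ t →
      ∫⁻ ω, (∫⁻ s in Set.Ioc (0 : ℝ) t, ENNReal.ofReal ((σ s ω) ^ 2) * B s ω
          * ((∫⁻ u in Set.Ioi s, ENNReal.ofReal ((σ u ω) ^ 2)) / ENNReal.ofReal (π s ω))) ∂μ
        = ∫⁻ ω, (∫⁻ s in Set.Ioc (0 : ℝ) t, ENNReal.ofReal ((σ s ω) ^ 2) * B s ω) ∂μ := by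
  intro t _
  have hρ : IsProgressive ℱ fun s ω => ENNReal.ofReal ((σ s ω) ^ 2 / π s ω) := fun i =>
    ENNReal.measurable_ofReal.comp
      (((hσprog.isProgressive i).pow_const 2).div (hπprog.isProgressive i))
  have hB_prog : IsProgressive ℱ B := by
    intro i
    have hA := hρ.setLIntegral_Ioc 0 i
    simp only [hB]
    exact Measurable.ite (hA (measurableSet_singleton ⊤)) measurable_const
      (ENNReal.measurable_ofReal.comp (Real.measurable_exp.comp hA.ennreal_toReal))
  exact lintegral_setLIntegral_sq_mul_tail_div_eq μ hσprog.isProgressive hσint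
    hπprog.isProgressive hπver hπpos hB_prog t
end

section
/- Let (π_t)_{t≥0} and (r_t)_{t≥0} be nonnegative progressively measurable processes such that π_t and ∫_0^t π_s r_s ds are integrable for each t, the process M_t = π_t + ∫_0^t π_s r_s ds is a martingale with respect to (F_t), and for each t ≥ 0 one has lim_{T→∞} E_t[π_T] = 0 almost surely. Then for each t ≥ 0 the pricing kernel admits the representation π_t = E_t[ ∫_t^∞ π_s r_s ds ] almost surely. -/
/-!
Write `ν_ω` for the measure `π_u(ω) r_u(ω) du` on the time axis. The point is that `ν_ω` has
finite total mass almost surely, so that the Bochner integrals `∫_0^t π_u r_u du` in `M_t` never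
take their junk value `0`. Sampling the nonnegative martingale `M` at rational times (Doob's
maximal inequality) bounds `ν_ω(0, q]` uniformly at all rational `q` before `ν_ω` explodes; and on
the `ℱ_q`-event `{ν_ω(0, q] = ∞}` we have `M_T = π_T` for `T ≥ q`, so `E[π_T; A]` is constant
there and tends to `0`, which forces `π`, hence `ν_ω`, to vanish after `q`. A measure without atoms
cannot explode in any other way.

With `M_t = π_t + ν_ω(0, t]` in hand, the martingale property reads
`E[π_t; A] = E[π_T; A] + E[ν(t, T]; A]` for `A ∈ ℱ_t`, and letting `T → ∞` gives
`E[π_t; A] = E[ν(t, ∞); A]`, which characterises `π_t` as `E_t[∫_t^∞ π_s r_s ds]`.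
-/

open MeasureTheory Filter Set Topology
open scoped ENNReal NNReal

namespace MeasureTheory

section Maximal

variable {Ω ι : Type*} {m0 : MeasurableSpace Ω} {μ : Measure Ω} [LinearOrder ι]
  {ℱ : Filtration ι m0} {f : ι → Ω → ℝ}

theorem Submartingale.maximal_ineq_finset [IsFiniteMeasure μ]
    (hf : Submartingale f ℱ μ) (ε : ℝ) {s : Finset ι} {j : ι} (hj : ∀ i ∈ s, i ≤ j) :
    ε * μ.real {ω | ∃ i ∈ s, ε ≤ f i ω} ≤ ∫ ω in {ω | ∃ i ∈ s, ε ≤ f i ω}, f j ω ∂μ := by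
  classical
  have hmeas : ∀ i, MeasurableSet[ℱ i] {ω | ε ≤ f i ω} := fun i =>
    measurableSet_le measurable_const (hf.stronglyAdapted i).measurable
  -- strengthen to sets `B` that are observable before the first time of `s`
  suffices ∀ B : Set Ω, (∀ i ∈ s, MeasurableSet[ℱ i] B) →
      ε * μ.real (B ∩ {ω | ∃ i ∈ s, ε ≤ f i ω}) ≤
        ∫ ω in B ∩ {ω | ∃ i ∈ s, ε ≤ f i ω}, f j ω ∂μ by
    simpa using this univ fun _ _ => MeasurableSet.univ
  induction s using Finset.induction_on_min with
  | empty => simp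
  | insert a s has ih =>
    intro B hB
    have hBa := hB a (Finset.mem_insert_self a s)
    set E := {ω | ∃ i ∈ s, ε ≤ f i ω}
    have hE : MeasurableSet E := by
      have : E = ⋃ i ∈ s, {ω | ε ≤ f i ω} := by ext; simp [E]
      rw [this]
      exact Finset.measurableSet_biUnion s fun i _ => ℱ.le i _ (hmeas i)
    have hsplit : B ∩ {ω | ∃ i ∈ insert a s, ε ≤ f i ω} =
        (B ∩ {ω | ε ≤ f a ω}) ∪ (B ∩ {ω | ε ≤ f a ω}ᶜ ∩ E) := by
      ext ω
      simp only [E, Finset.mem_insert, exists_eq_or_imp, mem_inter_iff, mem_union, mem_compl_iff,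
        mem_ofPred_eq]
      tauto
    have hfirst : MeasurableSet[ℱ a] (B ∩ {ω | ε ≤ f a ω}) := hBa.inter (hmeas a)
    have hrest : ∀ i ∈ s, MeasurableSet[ℱ i] (B ∩ {ω | ε ≤ f a ω}ᶜ) := fun i hi =>
      ℱ.mono (has i hi).le _ (hBa.inter (hmeas a).compl)
    have hdisj : Disjoint (B ∩ {ω | ε ≤ f a ω}) (B ∩ {ω | ε ≤ f a ω}ᶜ ∩ E) :=
      disjoint_left.mpr fun ω h1 h2 => h2.1.2 h1.2
    have hrestm : MeasurableSet (B ∩ {ω | ε ≤ f a ω}ᶜ ∩ E) :=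
      (ℱ.le a _ (hBa.inter (hmeas a).compl)).inter hE
    rw [hsplit, measureReal_union hdisj hrestm, mul_add,
      setIntegral_union hdisj hrestm (hf.integrable j).integrableOn (hf.integrable j).integrableOn]
    refine add_le_add ?_ (ih (fun i hi => hj i (Finset.mem_insert_of_mem hi)) _ hrest)
    calc ε * μ.real (B ∩ {ω | ε ≤ f a ω})
        ≤ ∫ ω in B ∩ {ω | ε ≤ f a ω}, f a ω ∂μ :=
          setIntegral_ge_of_const_le_real (ℱ.le a _ hfirst) (measure_ne_top μ _)
            (fun ω hω => hω.2) (hf.integrable a).integrableOn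
      _ ≤ ∫ ω in B ∩ {ω | ε ≤ f a ω}, f j ω ∂μ :=
          hf.setIntegral_le (hj a (Finset.mem_insert_self a s)) hfirst

theorem Martingale.measure_exists_ge_le [IsFiniteMeasure μ] [Countable ι] (hf : Martingale f ℱ μ)
    (hnn : 0 ≤ f) (i₀ : ι) {ε : ℝ} (hε : 0 < ε) :
    μ {ω | ∃ i, ε ≤ f i ω} ≤ ENNReal.ofReal ((∫ ω, f i₀ ω ∂μ) / ε) := by
  classical
  have hunion : {ω | ∃ i, ε ≤ f i ω} = ⋃ s : Finset ι, {ω | ∃ i ∈ s, ε ≤ f i ω} := by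
    ext ω
    simp only [mem_ofPred_eq, mem_iUnion]
    exact ⟨fun ⟨i, h⟩ => ⟨{i}, i, Finset.mem_singleton_self i, h⟩, fun ⟨_, i, _, h⟩ => ⟨i, h⟩⟩
  have hmono : Monotone fun s : Finset ι => {ω | ∃ i ∈ s, ε ≤ f i ω} :=
    fun s t hst ω ⟨i, hi, h⟩ => ⟨i, hst hi, h⟩
  rw [hunion, hmono.measure_iUnion]
  refine iSup_le fun s => ?_
  have : Nonempty ι := ⟨i₀⟩
  obtain ⟨j, hj⟩ := (insert i₀ s).exists_le
  have hmax := hf.submartingale.maximal_ineq_finset ε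
    (fun i hi => hj i (Finset.mem_insert_of_mem hi))
  have hint : ∫ ω in {ω | ∃ i ∈ s, ε ≤ f i ω}, f j ω ∂μ ≤ ∫ ω, f i₀ ω ∂μ := by
    have := hf.setIntegral_eq (hj i₀ (Finset.mem_insert_self _ _)) MeasurableSet.univ
    rw [setIntegral_univ, setIntegral_univ] at this
    rw [this]
    exact setIntegral_le_integral (hf.integrable j) (ae_of_all _ fun ω => hnn j ω)
  rw [← ofReal_measureReal]
  exact ENNReal.ofReal_le_ofReal ((le_div_iff₀' hε).mpr (hmax.trans hint))

theorem Martingale.ae_bddAbove_range_of_nonneg [IsFiniteMeasure μ] [Countable ι] [Nonempty ι]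
    (hf : Martingale f ℱ μ) (hnn : 0 ≤ f) : ∀ᵐ ω ∂μ, BddAbove (range fun i => f i ω) := by
  obtain ⟨i₀⟩ := ‹Nonempty ι›
  set K := ∫ ω, f i₀ ω ∂μ
  have hbound : ∀ ε > 0, μ {ω | ¬BddAbove (range fun i => f i ω)} ≤ ENNReal.ofReal (K / ε) := by
    intro ε hε
    refine (measure_mono fun ω hω => ?_).trans (hf.measure_exists_ge_le hnn i₀ hε)
    obtain ⟨_, ⟨i, rfl⟩, hi⟩ := not_bddAbove_iff.mp hω ε
    exact ⟨i, hi.le⟩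
  have hlim : Tendsto (fun ε => ENNReal.ofReal (K / ε)) atTop (𝓝 0) := by
    simpa using ENNReal.tendsto_ofReal (tendsto_const_nhds.div_atTop tendsto_id)
  exact le_antisymm (ge_of_tendsto hlim (eventually_gt_atTop 0 |>.mono hbound)) bot_le

end Maximal

theorem ae_eq_condExp_of_forall_setLIntegral_eq {Ω : Type*} {m m0 : MeasurableSpace Ω}
    {μ : Measure Ω} (hm : m ≤ m0) [SigmaFinite (μ.trim hm)] {f : Ω → ℝ} {g : Ω → ℝ≥0∞}
    (hf_nn : 0 ≤ᵐ[μ] f) (hf : Integrable f μ) (hfm : StronglyMeasurable[m] f)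
    (hg : AEMeasurable g μ)
    (hfg : ∀ s, MeasurableSet[m] s → ∫⁻ ω in s, ENNReal.ofReal (f ω) ∂μ = ∫⁻ ω in s, g ω ∂μ) :
    f =ᵐ[μ] μ[fun ω => (g ω).toReal|m] := by
  have hg_fin : ∫⁻ ω, g ω ∂μ ≠ ∞ := by
    rw [← setLIntegral_univ, ← hfg univ MeasurableSet.univ, setLIntegral_univ]
    exact hf.lintegral_lt_top.ne
  refine ae_eq_condExp_of_forall_setIntegral_eq hm
    (integrable_toReal_of_lintegral_ne_top hg hg_fin) (fun s _ _ => hf.integrableOn)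
    (fun s hs _ => ?_) hfm.aestronglyMeasurable
  rw [integral_toReal hg.restrict (ae_restrict_of_ae (ae_lt_top' hg hg_fin)), ← hfg s hs,
    integral_eq_lintegral_of_nonneg_ae (ae_restrict_of_ae hf_nn) hf.aestronglyMeasurable.restrict]

instance {α : Type*} [MeasurableSpace α] {μ : Measure α} [NullSingletonClass μ] (f : α → ℝ≥0∞) :
    NullSingletonClass (μ.withDensity f) :=
  ⟨fun x => withDensity_absolutelyContinuous μ f (measure_singleton x)⟩

theorem measure_Ioi_le_of_measure_Ioi_eq_zero {ν : Measure ℝ} [NullSingletonClass ν] {C : ℝ≥0∞}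
    (hbdd : ∀ q : ℚ≥0, ν (Ioc 0 q) ≠ ∞ → ν (Ioc 0 q) ≤ C)
    (htail : ∀ q : ℚ≥0, ν (Ioc 0 q) = ∞ → ν (Ioi q) = 0) : ν (Ioi 0) ≤ C := by
  set U₁ := ⋃ q : {q : ℚ≥0 // ν (Ioc 0 q) ≠ ∞}, Ioc (0 : ℝ) q.1
  set U₂ := ⋃ q : {q : ℚ≥0 // ν (Ioc 0 q) = ∞}, Ioi (q.1 : ℝ)
  -- outside `U₁ ∪ U₂` only the explosion time of `ν` can remain
  have hrest : (Ioi 0 \ (U₁ ∪ U₂)).Subsingleton := by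
    suffices ∀ x ∈ Ioi 0 \ (U₁ ∪ U₂), ∀ y ∈ Ioi 0 \ (U₁ ∪ U₂), y ≤ x from
      fun x hx y hy => le_antisymm (this y hy x hx) (this x hx y hy)
    intro x hx y hy
    by_contra! hxy
    obtain ⟨q, hxq, hqy⟩ := exists_rat_btwn hxy
    have hq : (0 : ℝ) ≤ q := (le_of_lt hx.1).trans hxq.le
    lift q to ℚ≥0 using (by exact_mod_cast hq)
    by_cases hfin : ν (Ioc 0 (q : ℝ)) = ∞
    · exact hy.2 (Or.inr (mem_iUnion.mpr ⟨⟨q, hfin⟩, by simpa using hqy⟩))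
    · exact hx.2 (Or.inl (mem_iUnion.mpr ⟨⟨q, hfin⟩, hx.1, by simpa using hxq.le⟩))
  have hU₁ : ν U₁ ≤ C := by
    have hmono : Monotone fun q : {q : ℚ≥0 // ν (Ioc 0 q) ≠ ∞} => Ioc (0 : ℝ) q.1 :=
      fun a b hab => Ioc_subset_Ioc_right (by exact_mod_cast hab)
    rw [hmono.measure_iUnion]
    exact iSup_le fun q => hbdd q.1 q.2
  have hU₂ : ν U₂ = 0 := measure_iUnion_null fun q => htail q.1 q.2
  calc ν (Ioi 0) ≤ ν (U₁ ∪ U₂ ∪ (Ioi 0 \ (U₁ ∪ U₂))) :=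
        measure_mono fun x hx => (em (x ∈ U₁ ∪ U₂)).elim Or.inl fun h => Or.inr ⟨hx, h⟩
    _ ≤ ν U₁ + ν U₂ + ν (Ioi 0 \ (U₁ ∪ U₂)) :=
        (measure_union_le _ _).trans (add_le_add_left (measure_union_le _ _) _)
    _ ≤ C := by rw [hU₂, hrest.measure_zero, add_zero, add_zero]; exact hU₁

end MeasureTheory

namespace MeasureTheory.IsStronglyProgressive

variable {Ω β : Type*} {m0 : MeasurableSpace Ω} {ℱ : Filtration ℝ m0} [TopologicalSpace β]
  {g : ℝ → Ω → β}

theorem stronglyMeasurable_min (hg : IsStronglyProgressive ℱ g) (T : ℝ) :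
    StronglyMeasurable[(borel ℝ).prod (ℱ T)] fun p : ℝ × Ω => g (min p.1 T) p.2 := by
  have hclamp : Measurable[(borel ℝ).prod (ℱ T), Subtype.instMeasurableSpace.prod (ℱ T)]
      fun p : ℝ × Ω => ((⟨min p.1 T, mem_Iic.mpr (min_le_right _ _)⟩ : Iic T), p.2) :=
    (measurable_fst.min measurable_const).subtype_mk.prodMk measurable_snd
  exact (hg T).comp_measurable hclamp

theorem stronglyMeasurable_uncurry_s16 [TopologicalSpace.PseudoMetrizableSpace β]
    (hg : IsStronglyProgressive ℱ g) :
    StronglyMeasurable (Function.uncurry g) := by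
  refine stronglyMeasurable_of_tendsto atTop
    (fun n : ℕ => (hg.stronglyMeasurable_min n).mono ?_) (tendsto_pi_nhds.mpr fun p => ?_)
  · exact sup_le_sup le_rfl (MeasurableSpace.comap_mono (ℱ.le n))
  · obtain ⟨N, hN⟩ := exists_nat_ge p.1
    refine tendsto_atTop_of_eventually_const (i₀ := N) fun n hn => ?_
    rw [min_eq_left (hN.trans (by exact_mod_cast hn))]
    rfl

theorem measurable_setLIntegral {g : ℝ → Ω → ℝ≥0∞} (hg : IsStronglyProgressive ℱ g) {S : Set ℝ}
    (hSm : MeasurableSet S) {T : ℝ} (hS : S ⊆ Iic T) :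
    Measurable[ℱ T] fun ω => ∫⁻ u in S, g u ω := by
  have hswap : Measurable[(ℱ T).prod (borel ℝ)] fun q : Ω × ℝ => g (min q.2 T) q.1 :=
    (hg.stronglyMeasurable_min T).measurable.comp (@measurable_swap _ _ (ℱ T) (borel ℝ))
  convert @Measurable.lintegral_prod_right' Ω ℝ (ℱ T) (borel ℝ) (volume.restrict S) _ _ hswap
    using 2 with ω
  exact setLIntegral_congr_fun hSm fun u hu => by rw [min_eq_left (hS hu)]

end MeasureTheory.IsStronglyProgressive

noncomputable section

variable {Ω : Type*} {m0 : MeasurableSpace Ω}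

def deflatedValue (π r : ℝ → Ω → ℝ) (t : ℝ) (ω : Ω) : ℝ :=
  π t ω + ∫ u in Ioc 0 t, π u ω * r u ω

/-- `ν_ω`: its values are the accumulated dividends `∫_S π_u r_u du` as extended integrals, which
never take the junk value of the Bochner integrals in `deflatedValue`. -/
def dividendMeasure (π r : ℝ → Ω → ℝ) (ω : Ω) : Measure ℝ :=
  volume.withDensity fun u => ENNReal.ofReal (π u ω * r u ω)

instance (π r : ℝ → Ω → ℝ) (ω : Ω) : NullSingletonClass (dividendMeasure π r ω) := by
  unfold dividendMeasure; infer_instance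

structure DeflatedValueMartingale (μ : Measure Ω) (ℱ : Filtration ℝ m0) (π r : ℝ → Ω → ℝ) :
    Prop where
  isStronglyProgressive_π : IsStronglyProgressive ℱ π
  isStronglyProgressive_r : IsStronglyProgressive ℱ r
  π_nonneg : ∀ t ω, 0 ≤ π t ω
  r_nonneg : ∀ t ω, 0 ≤ r t ω
  integrable_π : ∀ t, Integrable (π t) μ
  integrable_deflatedValue : ∀ t, Integrable (deflatedValue π r t) μ
  condExp_deflatedValue : ∀ s t, 0 ≤ s → s ≤ t →
    μ[deflatedValue π r t|ℱ s] =ᵐ[μ] deflatedValue π r s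

namespace DeflatedValueMartingale

variable {μ : Measure Ω} {ℱ : Filtration ℝ m0} {π r : ℝ → Ω → ℝ}

theorem isStronglyProgressive_dividendDensity (h : DeflatedValueMartingale μ ℱ π r) :
    IsStronglyProgressive ℱ fun u ω => ENNReal.ofReal (π u ω * r u ω) := fun T =>
  ENNReal.continuous_ofReal.comp_stronglyMeasurable
    (h.isStronglyProgressive_π.mul h.isStronglyProgressive_r T)

theorem measurable_dividendDensity (h : DeflatedValueMartingale μ ℱ π r) :
    Measurable (Function.uncurry fun ω u => ENNReal.ofReal (π u ω * r u ω)) :=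
  h.isStronglyProgressive_dividendDensity.stronglyMeasurable_uncurry_s16.measurable.comp
    measurable_swap

theorem measurable_dividendMeasure (h : DeflatedValueMartingale μ ℱ π r) (S : Set ℝ) :
    Measurable fun ω => dividendMeasure π r ω S := by
  simp_rw [dividendMeasure, withDensity_apply' _ S]
  exact h.measurable_dividendDensity.lintegral_prod_right'

theorem measurable_dividendMeasure_Ioc (h : DeflatedValueMartingale μ ℱ π r) (T : ℝ) :
    Measurable[ℱ T] fun ω => dividendMeasure π r ω (Ioc 0 T) := by
  simp_rw [dividendMeasure, withDensity_apply' _ (Ioc 0 T)]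
  exact h.isStronglyProgressive_dividendDensity.measurable_setLIntegral measurableSet_Ioc
    Ioc_subset_Iic_self

theorem integral_eq_toReal_dividendMeasure (h : DeflatedValueMartingale μ ℱ π r) (S : Set ℝ)
    (ω : Ω) : ∫ u in S, π u ω * r u ω = (dividendMeasure π r ω S).toReal := by
  have hpath : Measurable fun u => π u ω * r u ω :=
    (h.isStronglyProgressive_π.mul h.isStronglyProgressive_r).stronglyMeasurable_uncurry_s16
      |>.measurable.comp measurable_prodMk_right
  rw [dividendMeasure, withDensity_apply' _ S, integral_eq_lintegral_of_nonneg_ae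
    (ae_of_all _ fun u => mul_nonneg (h.π_nonneg u ω) (h.r_nonneg u ω)) hpath.aestronglyMeasurable]

theorem π_le_deflatedValue (h : DeflatedValueMartingale μ ℱ π r) (t : ℝ) (ω : Ω) :
    π t ω ≤ deflatedValue π r t ω :=
  le_add_of_nonneg_right
    (integral_nonneg fun u => mul_nonneg (h.π_nonneg u ω) (h.r_nonneg u ω))

theorem deflatedValue_nonneg (h : DeflatedValueMartingale μ ℱ π r) (t : ℝ) (ω : Ω) :
    0 ≤ deflatedValue π r t ω :=
  (h.π_nonneg t ω).trans (h.π_le_deflatedValue t ω)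

theorem stronglyMeasurable_deflatedValue (h : DeflatedValueMartingale μ ℱ π r) (t : ℝ) :
    StronglyMeasurable[ℱ t] (deflatedValue π r t) := by
  have hdiv : StronglyMeasurable[ℱ t] fun ω => ∫ u in Ioc 0 t, π u ω * r u ω := by
    simp_rw [h.integral_eq_toReal_dividendMeasure]
    exact (h.measurable_dividendMeasure_Ioc t).ennreal_toReal.stronglyMeasurable
  exact (h.isStronglyProgressive_π.stronglyAdapted t).add hdiv

theorem setIntegral_deflatedValue [IsFiniteMeasure μ] (h : DeflatedValueMartingale μ ℱ π r)
    {s t : ℝ} (hs : 0 ≤ s) (hst : s ≤ t) {A : Set Ω} (hA : MeasurableSet[ℱ s] A) :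
    ∫ ω in A, deflatedValue π r t ω ∂μ = ∫ ω in A, deflatedValue π r s ω ∂μ := by
  rw [← setIntegral_condExp (ℱ.le s) (h.integrable_deflatedValue t) hA]
  exact setIntegral_congr_ae (ℱ.le s _ hA)
    ((h.condExp_deflatedValue s t hs hst).mono fun _ hω _ => hω)

theorem ae_bddAbove_deflatedValue [IsFiniteMeasure μ] (h : DeflatedValueMartingale μ ℱ π r) :
    ∀ᵐ ω ∂μ, BddAbove (range fun q : ℚ≥0 => deflatedValue π r q ω) := by
  let 𝒢 : Filtration ℚ≥0 m0 :=
    ⟨fun q => ℱ q, fun _ _ hpq => ℱ.mono (NNRat.cast_mono hpq), fun q => ℱ.le q⟩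
  have hmart : Martingale (fun q : ℚ≥0 => deflatedValue π r q) 𝒢 μ :=
    ⟨fun q => h.stronglyMeasurable_deflatedValue q,
      fun p q hpq => h.condExp_deflatedValue p q p.cast_nonneg (NNRat.cast_mono hpq)⟩
  exact hmart.ae_bddAbove_range_of_nonneg fun q ω => h.deflatedValue_nonneg q ω

theorem tendsto_setIntegral_π [IsFiniteMeasure μ] (h : DeflatedValueMartingale μ ℱ π r) {t : ℝ}
    (ht : 0 ≤ t) (hlim : ∀ᵐ ω ∂μ, Tendsto (fun T => (μ[π T|ℱ t]) ω) atTop (𝓝 0)) {A : Set Ω}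
    (hA : MeasurableSet[ℱ t] A) : Tendsto (fun T => ∫ ω in A, π T ω ∂μ) atTop (𝓝 0) := by
  -- dominate `E_t[π_T] ≤ E_t[M_T] = M_t`
  have hdom : ∀ᶠ T in atTop, ∀ᵐ ω ∂μ.restrict A, ‖(μ[π T|ℱ t]) ω‖ ≤ deflatedValue π r t ω := by
    filter_upwards [eventually_ge_atTop t] with T hT
    have hle : μ[π T|ℱ t] ≤ᵐ[μ] deflatedValue π r t :=
      (condExp_mono (h.integrable_π T) (h.integrable_deflatedValue T)
        (ae_of_all _ (h.π_le_deflatedValue T))).trans (h.condExp_deflatedValue t T ht hT).le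
    filter_upwards [ae_restrict_of_ae hle,
      ae_restrict_of_ae (condExp_nonneg (ae_of_all _ (h.π_nonneg T)))] with ω hω hω₀
    rwa [Real.norm_of_nonneg hω₀]
  have hconv := tendsto_integral_filter_of_dominated_convergence _
    (Eventually.of_forall fun T => stronglyMeasurable_condExp.mono (ℱ.le t)
      |>.aestronglyMeasurable) hdom (h.integrable_deflatedValue t).integrableOn
    (ae_restrict_of_ae hlim)
  rw [integral_zero] at hconv
  exact hconv.congr fun T => setIntegral_condExp (ℱ.le t) (h.integrable_π T) hA

theorem ae_restrict_π_eq_zero [IsFiniteMeasure μ] (h : DeflatedValueMartingale μ ℱ π r) {q : ℝ}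
    (hq : 0 ≤ q) (hlim : ∀ᵐ ω ∂μ, Tendsto (fun T => (μ[π T|ℱ q]) ω) atTop (𝓝 0)) {T : ℝ}
    (hT : q ≤ T) : π T =ᵐ[μ.restrict {ω | dividendMeasure π r ω (Ioc 0 q) = ∞}] 0 := by
  set A := {ω | dividendMeasure π r ω (Ioc 0 q) = ∞}
  have hA : MeasurableSet[ℱ q] A := h.measurable_dividendMeasure_Ioc q (measurableSet_singleton ∞)
  -- on `A` the Bochner integral `∫_0^T π_u r_u du` takes the junk value `0` for all `T ≥ q`
  have hM : ∀ T, q ≤ T → ∫ ω in A, π T ω ∂μ = ∫ ω in A, deflatedValue π r T ω ∂μ := by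
    intro T hT
    refine setIntegral_congr_fun (ℱ.le q _ hA) fun ω (hω : _ = ∞) => ?_
    have hexpl : dividendMeasure π r ω (Ioc 0 T) = ∞ :=
      top_le_iff.mp (hω ▸ measure_mono (Ioc_subset_Ioc_right hT))
    simp [deflatedValue, h.integral_eq_toReal_dividendMeasure, hexpl]
  have hconst : ∀ T, q ≤ T → ∫ ω in A, π T ω ∂μ = ∫ ω in A, π q ω ∂μ := fun T hT => by
    rw [hM T hT, hM q le_rfl, h.setIntegral_deflatedValue hq hT hA]
  have hzero : ∫ ω in A, π q ω ∂μ = 0 :=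
    tendsto_nhds_unique (tendsto_const_nhds.congr'
      (eventually_ge_atTop q |>.mono fun T hT => (hconst T hT).symm))
      (h.tendsto_setIntegral_π hq hlim hA)
  exact (integral_eq_zero_iff_of_nonneg (h.π_nonneg T) (h.integrable_π T).integrableOn).mp
    (by rw [hconst T hT, hzero])

theorem ae_dividendMeasure_Ioi_eq_zero [IsFiniteMeasure μ] (h : DeflatedValueMartingale μ ℱ π r)
    {q : ℝ} (hq : 0 ≤ q) (hlim : ∀ᵐ ω ∂μ, Tendsto (fun T => (μ[π T|ℱ q]) ω) atTop (𝓝 0)) :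
    ∀ᵐ ω ∂μ, dividendMeasure π r ω (Ioc 0 q) = ∞ → dividendMeasure π r ω (Ioi q) = 0 := by
  set A := {ω | dividendMeasure π r ω (Ioc 0 q) = ∞}
  have hA : MeasurableSet A :=
    ℱ.le q _ (h.measurable_dividendMeasure_Ioc q (measurableSet_singleton ∞))
  have hinner : ∀ u ∈ Ioi q, ∫⁻ ω in A, ENNReal.ofReal (π u ω * r u ω) ∂μ = 0 := fun u hu => by
    refine (lintegral_congr_ae (g := 0) ?_).trans lintegral_zero
    exact (h.ae_restrict_π_eq_zero hq hlim (le_of_lt hu)).mono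
      fun ω (hω : π u ω = 0) => by simp [hω]
  have htonelli : ∫⁻ ω in A, dividendMeasure π r ω (Ioi q) ∂μ = 0 := by
    simp_rw [dividendMeasure, withDensity_apply' _ (Ioi q)]
    rw [lintegral_lintegral_swap h.measurable_dividendDensity.aemeasurable,
      setLIntegral_congr_fun measurableSet_Ioi hinner, lintegral_zero]
  exact (ae_restrict_iff' hA).mp
    ((lintegral_eq_zero_iff (h.measurable_dividendMeasure _)).mp htonelli)

theorem ae_dividendMeasure_Ioi_lt_top [IsFiniteMeasure μ] (h : DeflatedValueMartingale μ ℱ π r)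
    (hlim : ∀ t, 0 ≤ t → ∀ᵐ ω ∂μ, Tendsto (fun T => (μ[π T|ℱ t]) ω) atTop (𝓝 0)) :
    ∀ᵐ ω ∂μ, dividendMeasure π r ω (Ioi 0) < ∞ := by
  have htail : ∀ᵐ ω ∂μ, ∀ q : ℚ≥0,
      dividendMeasure π r ω (Ioc 0 q) = ∞ → dividendMeasure π r ω (Ioi q) = 0 :=
    ae_all_iff.mpr fun q => h.ae_dividendMeasure_Ioi_eq_zero q.cast_nonneg (hlim q q.cast_nonneg)
  filter_upwards [h.ae_bddAbove_deflatedValue, htail] with ω ⟨C, hC⟩ htail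
  refine (measure_Ioi_le_of_measure_Ioi_eq_zero (C := ENNReal.ofReal C) (fun q hq => ?_)
    htail).trans_lt ENNReal.ofReal_lt_top
  rw [← ENNReal.ofReal_toReal hq, ← h.integral_eq_toReal_dividendMeasure]
  exact ENNReal.ofReal_le_ofReal
    ((le_add_of_nonneg_left (h.π_nonneg q ω)).trans (hC (mem_range_self q)))

theorem ae_ofReal_deflatedValue (h : DeflatedValueMartingale μ ℱ π r)
    (hfin : ∀ᵐ ω ∂μ, dividendMeasure π r ω (Ioi 0) < ∞) (s : ℝ) :
    ∀ᵐ ω ∂μ, ENNReal.ofReal (deflatedValue π r s ω) =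
      ENNReal.ofReal (π s ω) + dividendMeasure π r ω (Ioc 0 s) := by
  filter_upwards [hfin] with ω hω
  rw [deflatedValue, h.integral_eq_toReal_dividendMeasure,
    ENNReal.ofReal_add (h.π_nonneg s ω) ENNReal.toReal_nonneg,
    ENNReal.ofReal_toReal ((measure_mono Ioc_subset_Ioi_self).trans_lt hω).ne]

theorem setLIntegral_π_eq [IsFiniteMeasure μ] (h : DeflatedValueMartingale μ ℱ π r)
    (hfin : ∀ᵐ ω ∂μ, dividendMeasure π r ω (Ioi 0) < ∞) {t T : ℝ} (ht : 0 ≤ t) (htT : t ≤ T)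
    {A : Set Ω} (hA : MeasurableSet[ℱ t] A) :
    ∫⁻ ω in A, ENNReal.ofReal (π t ω) ∂μ =
      ∫⁻ ω in A, ENNReal.ofReal (π T ω) ∂μ + ∫⁻ ω in A, dividendMeasure π r ω (Ioc t T) ∂μ := by
  have hvalue : ∀ s, ∫⁻ ω in A, ENNReal.ofReal (deflatedValue π r s ω) ∂μ =
      ∫⁻ ω in A, ENNReal.ofReal (π s ω) ∂μ + ∫⁻ ω in A, dividendMeasure π r ω (Ioc 0 s) ∂μ :=
    fun s => by rw [lintegral_congr_ae (ae_restrict_of_ae (h.ae_ofReal_deflatedValue hfin s)),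
      lintegral_add_right _ (h.measurable_dividendMeasure _)]
  have hofReal : ∀ s, ∫⁻ ω in A, ENNReal.ofReal (deflatedValue π r s ω) ∂μ =
      ENNReal.ofReal (∫ ω in A, deflatedValue π r s ω ∂μ) := fun s =>
    (ofReal_integral_eq_lintegral_ofReal (h.integrable_deflatedValue s).integrableOn
      (ae_of_all _ (h.deflatedValue_nonneg s))).symm
  have hmart : ∫⁻ ω in A, ENNReal.ofReal (deflatedValue π r T ω) ∂μ =
      ∫⁻ ω in A, ENNReal.ofReal (deflatedValue π r t ω) ∂μ := by
    rw [hofReal, hofReal, h.setIntegral_deflatedValue ht htT hA]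
  have hsplit : ∀ ω, dividendMeasure π r ω (Ioc 0 T) =
      dividendMeasure π r ω (Ioc 0 t) + dividendMeasure π r ω (Ioc t T) := fun ω => by
    rw [← Ioc_union_Ioc_eq_Ioc ht htT,
      measure_union (Ioc_disjoint_Ioc_of_le le_rfl) measurableSet_Ioc]
  have hfin_t : ∫⁻ ω in A, dividendMeasure π r ω (Ioc 0 t) ∂μ ≠ ∞ :=
    ne_top_of_le_ne_top (by rw [← hvalue, hofReal]; exact ENNReal.ofReal_ne_top) le_add_self
  rw [hvalue, hvalue, lintegral_congr hsplit,
    lintegral_add_left (h.measurable_dividendMeasure _), add_left_comm, add_comm] at hmart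
  exact (ENNReal.add_left_inj hfin_t).mp hmart.symm

theorem setLIntegral_π_eq_dividendMeasure_Ioi [IsFiniteMeasure μ]
    (h : DeflatedValueMartingale μ ℱ π r) (hfin : ∀ᵐ ω ∂μ, dividendMeasure π r ω (Ioi 0) < ∞)
    {t : ℝ} (ht : 0 ≤ t) (hlim : ∀ᵐ ω ∂μ, Tendsto (fun T => (μ[π T|ℱ t]) ω) atTop (𝓝 0))
    {A : Set Ω} (hA : MeasurableSet[ℱ t] A) :
    ∫⁻ ω in A, ENNReal.ofReal (π t ω) ∂μ = ∫⁻ ω in A, dividendMeasure π r ω (Ioi t) ∂μ := by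
  have hπ : Tendsto (fun n : ℕ => ∫⁻ ω in A, ENNReal.ofReal (π n ω) ∂μ) atTop (𝓝 0) := by
    have := (ENNReal.tendsto_ofReal (h.tendsto_setIntegral_π ht hlim hA)).comp
      tendsto_natCast_atTop_atTop
    rw [ENNReal.ofReal_zero] at this
    exact this.congr fun n => ofReal_integral_eq_lintegral_ofReal (h.integrable_π n).integrableOn
      (ae_of_all _ (h.π_nonneg n))
  have hmono : Monotone fun n : ℕ => Ioc t (n : ℝ) :=
    fun a b hab => Ioc_subset_Ioc_right (by exact_mod_cast hab)
  have hunion : ⋃ n : ℕ, Ioc t (n : ℝ) = Ioi t :=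
    iUnion_Ioc_eq_Ioi_self_iff.mpr fun x _ => exists_nat_ge x
  have hdiv : Tendsto (fun n : ℕ => ∫⁻ ω in A, dividendMeasure π r ω (Ioc t n) ∂μ) atTop
      (𝓝 (∫⁻ ω in A, dividendMeasure π r ω (Ioi t) ∂μ)) :=
    lintegral_tendsto_of_tendsto_of_monotone
      (fun n => (h.measurable_dividendMeasure _).aemeasurable)
      (ae_of_all _ fun ω _ _ hab => measure_mono (hmono hab))
      (ae_of_all _ fun ω => hunion ▸ tendsto_measure_iUnion_atTop hmono)
  refine tendsto_nhds_unique (tendsto_const_nhds.congr' ?_) (zero_add (_ : ℝ≥0∞) ▸ hπ.add hdiv)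
  filter_upwards [eventually_ge_atTop ⌈t⌉₊] with n hn
  exact h.setLIntegral_π_eq hfin ht ((Nat.le_ceil t).trans (by exact_mod_cast hn)) hA

end DeflatedValueMartingale

end

/-- Let `(π_t)` and `(r_t)` be nonnegative progressively measurable processes
such that `π_t` and `∫_0^t π_s r_s ds` are integrable for each `t`, the deflated total value
process `M_t = π_t + ∫_0^t π_s r_s ds` of a unit floating rate note is a martingale, and for
each `t ≥ 0` one has `E_t[π_T] → 0` a.s. as `T → ∞`. Then for each `t ≥ 0`,
`π_t = E_t[∫_t^∞ π_s r_s ds]` almost surely. -/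
theorem pricing_kernel_conditional_representation
    {Ω : Type*} {m0 : MeasurableSpace Ω} (μ : Measure Ω) [IsProbabilityMeasure μ]
    (ℱ : Filtration ℝ m0) (π r : ℝ → Ω → ℝ)
    (hπprog : ProgMeasurable ℱ π) (hrprog : ProgMeasurable ℱ r)
    (hπnn : ∀ t ω, 0 ≤ π t ω) (hrnn : ∀ t ω, 0 ≤ r t ω)
    (hπint : ∀ t : ℝ, Integrable (π t) μ)
    (hMint : ∀ t : ℝ, Integrable (fun ω => ∫ s in Set.Ioc (0 : ℝ) t, π s ω * r s ω) μ)
    (hmart : ∀ s t : ℝ, 0 ≤ s → s ≤ t →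
      μ[fun ω => π t ω + ∫ u in Set.Ioc (0 : ℝ) t, π u ω * r u ω|ℱ s]
        =ᵐ[μ] fun ω => π s ω + ∫ u in Set.Ioc (0 : ℝ) s, π u ω * r u ω)
    (hlim : ∀ t : ℝ, 0 ≤ t →
      ∀ᵐ ω ∂μ, Tendsto (fun T : ℝ => (μ[π T|ℱ t]) ω) atTop (nhds 0)) :
    ∀ t : ℝ, 0 ≤ t →
      π t =ᵐ[μ] μ[fun ω => ∫ s in Set.Ioi t, π s ω * r s ω|ℱ t] := by
  have h : DeflatedValueMartingale μ ℱ π r :=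
    ⟨hπprog, hrprog, hπnn, hrnn, hπint, fun t => (hπint t).add (hMint t), hmart⟩
  have hfin := h.ae_dividendMeasure_Ioi_lt_top hlim
  intro t ht
  simp_rw [h.integral_eq_toReal_dividendMeasure]
  exact ae_eq_condExp_of_forall_setLIntegral_eq (ℱ.le t) (ae_of_all _ (hπnn t)) (hπint t)
    (h.isStronglyProgressive_π.stronglyAdapted t) (h.measurable_dividendMeasure _).aemeasurable
    fun A hA => h.setLIntegral_π_eq_dividendMeasure_Ioi hfin ht (hlim t ht) hA
end
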